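/- arXiv:2309.15395 — 4 statements merged into one kernel-verified Lean document; each statement's English description precedes it below -/
import Mathlib

section
/- Let q* be an extreme point of the CMDP linear-program feasible set F. Then the number of triples (h,x,a) with q*_h(x,a) ≠ 0 is at most H·|S| + N. -/
/-!
If the support of an extreme point `q` had more than `H * |S| + N` elements, some nonzero
direction `d` supported on it would be annihilated by the `H * |S|` flow-balance functionals and
the `N` utility functionals. As `q` is positive on its support, `q + t • d` and `q - t • d` are
both feasible for small `t ≠ 0`, and `q` is their midpoint.
-/

open Module Set Filter Topology

theorem exists_ne_zero_map_eq_zero_support_subset {K ι V : Type*} [Field K] [Fintype ι]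
    [AddCommGroup V] [Module K V] [FiniteDimensional K V] (Φ : (ι → K) →ₗ[K] V) {s : Set ι}
    (hs : finrank K V < s.ncard) :
    ∃ d : ι → K, d ≠ 0 ∧ Φ d = 0 ∧ Function.support d ⊆ s := by
  classical
  let ext := Function.ExtendByZero.linearMap K ((↑) : s → ι)
  have hext : Function.Injective ext := fun c c' h => funext fun i => by
    simpa [ext, Subtype.val_injective.extend_apply] using congrFun h i
  obtain ⟨c, hc, hc0⟩ := (Submodule.ne_bot_iff _).1 <| (Φ ∘ₗ ext).ker_ne_bot_of_finrank_lt <| by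
    rwa [finrank_pi, Fintype.card_eq_nat_card, Nat.card_coe_set_eq]
  refine ⟨ext c, fun h => hc0 (hext (h.trans (map_zero ext).symm)), hc, fun i hi => ?_⟩
  by_contra his
  exact hi (Function.extend_apply' _ _ _ fun ⟨j, hj⟩ => his (hj ▸ j.2))

theorem eventually_nonneg_add_smul {ι : Type*} [Finite ι] {q d : ι → ℝ} (hq : 0 ≤ q)
    (hd : Function.support d ⊆ Function.support q) :
    ∀ᶠ t in 𝓝 (0 : ℝ), 0 ≤ q + t • d := by
  simp only [Pi.le_def, Pi.add_apply, Pi.smul_apply, smul_eq_mul, Pi.zero_apply]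
  refine eventually_all.2 fun i => ?_
  rcases (hq i).eq_or_lt with hqi | hqi
  · have : d i = 0 := Function.notMem_support.1 fun h => hd h hqi.symm
    simp [← hqi, this]
  · refine ((ContinuousAt.eventually_lt continuousAt_const (by fun_prop)) (by simpa using hqi)).mono
      fun t ht => ht.le

theorem eq_zero_of_add_mem_of_sub_mem_of_mem_extremePoints {E : Type*} [AddCommGroup E]
    [Module ℝ E] {C : Set E} {x v : E} (hx : x ∈ extremePoints ℝ C) (hadd : x + v ∈ C)
    (hsub : x - v ∈ C) : v = 0 := by
  have : x ∈ openSegment ℝ (x + v) (x - v) :=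
    ⟨1 / 2, 1 / 2, by norm_num, by norm_num, by norm_num, by module⟩
  simpa using hx.2 hadd hsub this

theorem ncard_support_le_finrank_of_mem_extremePoints {ι V : Type*} [Fintype ι]
    [AddCommGroup V] [Module ℝ V] [FiniteDimensional ℝ V] {F : Set (ι → ℝ)} {q : ι → ℝ}
    (hq : q ∈ extremePoints ℝ F) (hq0 : 0 ≤ q) (Φ : (ι → ℝ) →ₗ[ℝ] V)
    (hF : ∀ d, Φ d = 0 → 0 ≤ q + d → q + d ∈ F) :
    (Function.support q).ncard ≤ finrank ℝ V := by
  by_contra! hlt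
  obtain ⟨d, hd0, hΦd, hdq⟩ := exists_ne_zero_map_eq_zero_support_subset Φ hlt
  have hadd := eventually_nonneg_add_smul hq0 hdq
  have hsub : ∀ᶠ t in 𝓝 (0 : ℝ), 0 ≤ q - t • d := by
    simpa [sub_eq_add_neg] using (continuous_neg.tendsto' 0 0 neg_zero).eventually hadd
  have hboth : ∀ᶠ t in 𝓝[≠] (0 : ℝ), (0 ≤ q + t • d ∧ 0 ≤ q - t • d) ∧ t ≠ 0 :=
    ((hadd.and hsub).filter_mono nhdsWithin_le_nhds).and self_mem_nhdsWithin
  obtain ⟨t, ⟨hqadd, hqsub⟩, ht⟩ := hboth.exists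
  have hΦtd : Φ (t • d) = 0 := by rw [map_smul, hΦd, smul_zero]
  have hFsub : q + -(t • d) ∈ F :=
    hF _ (by rw [map_neg, hΦtd, neg_zero]) (by rwa [← sub_eq_add_neg])
  have := eq_zero_of_add_mem_of_sub_mem_of_mem_extremePoints hq (hF _ hΦtd hqadd)
    (by rwa [sub_eq_add_neg])
  exact hd0 ((smul_eq_zero.1 this).resolve_left ht)

def uncurryLinearEquiv₃ (R α β γ : Type*) [Semiring R] :
    (α → β → γ → R) ≃ₗ[R] (α × β × γ → R) where
  toFun q p := q p.1 p.2.1 p.2.2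
  invFun q h x a := q (h, x, a)
  map_add' _ _ := rfl
  map_smul' _ _ := rfl
  left_inv _ := rfl
  right_inv _ := rfl

section CMDP

variable {S A κ : Type*} [Fintype S] [Fintype A] {H : ℕ}

/-- The rows with `h = 0`, which have no inflow, carry the initial-distribution constraint. -/
def flowBalance (P : ℕ → S → A → S → ℝ) : (Fin H → S → A → ℝ) →ₗ[ℝ] (Fin H × S → ℝ) where
  toFun q p := ∑ a, q p.1 p.2 a - if (p.1 : ℕ) = 0 then 0 else
    ∑ x', ∑ a', P (p.1 - 1) x' a' p.2 * q ⟨p.1 - 1, by omega⟩ x' a'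
  map_add' q q' := by
    ext ⟨h, x⟩; by_cases h0 : (h : ℕ) = 0 <;> simp [h0, Finset.sum_add_distrib, mul_add]; ring
  map_smul' c q := by
    ext ⟨h, x⟩; by_cases h0 : (h : ℕ) = 0 <;> simp [h0, Finset.mul_sum, mul_sub, mul_left_comm]

theorem flowBalance_apply_zero (P : ℕ → S → A → S → ℝ) (q : Fin H → S → A → ℝ) (hH : 0 < H)
    (x : S) : flowBalance P q (⟨0, hH⟩, x) = ∑ a, q ⟨0, hH⟩ x a := by
  simp [flowBalance]

theorem flowBalance_apply_succ (P : ℕ → S → A → S → ℝ) (q : Fin H → S → A → ℝ) (h : Fin H)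
    (hh : (h : ℕ) + 1 < H) (x : S) :
    flowBalance P q (⟨h + 1, hh⟩, x) =
      ∑ a, q ⟨h + 1, hh⟩ x a - ∑ x', ∑ a', P h x' a' x * q h x' a' := by
  simp [flowBalance]

def totalUtility (g : κ → Fin H → S → A → ℝ) : (Fin H → S → A → ℝ) →ₗ[ℝ] (κ → ℝ) where
  toFun q n := ∑ h, ∑ x, ∑ a, q h x a * g n h x a
  map_add' q q' := by ext; simp [Finset.sum_add_distrib, add_mul]
  map_smul' c q := by ext; simp [Finset.mul_sum, mul_assoc]

def occupancyPolytope (hH : 1 ≤ H) (xini : S) (P : ℕ → S → A → S → ℝ)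
    (g : κ → Fin H → S → A → ℝ) (ρ : κ → ℝ) : Set (Fin H → S → A → ℝ) :=
  {q | (∀ h x a, 0 ≤ q h x a) ∧
    (∀ n, ρ n ≤ ∑ h, ∑ x, ∑ a, q h x a * g n h x a) ∧
    (∀ h : Fin H, ∀ hh : (h : ℕ) + 1 < H, ∀ x,
      ∑ a, q ⟨h + 1, hh⟩ x a = ∑ x', ∑ a', P h x' a' x * q h x' a') ∧
    (∑ a, q ⟨0, hH⟩ xini a = 1 ∧ ∀ x, x ≠ xini → ∑ a, q ⟨0, hH⟩ x a = 0)}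

theorem add_mem_occupancyPolytope {hH : 1 ≤ H} {xini : S} {P : ℕ → S → A → S → ℝ}
    {g : κ → Fin H → S → A → ℝ} {ρ : κ → ℝ} {q d : Fin H → S → A → ℝ}
    (hq : q ∈ occupancyPolytope hH xini P g ρ) (hqd : ∀ h x a, 0 ≤ q h x a + d h x a)
    (hflow : flowBalance P d = 0) (hutil : totalUtility g d = 0) :
    q + d ∈ occupancyPolytope hH xini P g ρ := by
  obtain ⟨-, hρ, hstep, hinit, hinit'⟩ := hq
  have hd0 (x : S) : ∑ a, d ⟨0, hH⟩ x a = 0 := by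
    rw [← flowBalance_apply_zero P d hH x, hflow, Pi.zero_apply]
  have hdstep (h : Fin H) (hh : (h : ℕ) + 1 < H) (x : S) :
      ∑ a, d ⟨h + 1, hh⟩ x a = ∑ x', ∑ a', P h x' a' x * d h x' a' := by
    rw [← sub_eq_zero, ← flowBalance_apply_succ P d h hh x, hflow, Pi.zero_apply]
  have hdutil (n : κ) : ∑ h, ∑ x, ∑ a, d h x a * g n h x a = 0 := congrFun hutil n
  refine ⟨hqd, fun n => ?_, fun h hh x => ?_, ?_, fun x hx => ?_⟩
  · simpa [add_mul, Finset.sum_add_distrib, hdutil] using hρ n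
  · simp [mul_add, Finset.sum_add_distrib, hstep, hdstep]
  · simp [Finset.sum_add_distrib, hinit, hd0]
  · simp [Finset.sum_add_distrib, hinit' x hx, hd0]

end CMDP

/-- **Limited Stochasticity, support bound.** If `q` is an extreme point of the CMDP
linear-program feasible set `F`, then the number of triples `(h, x, a)` with
`q h x a ≠ 0` is at most `H * |S| + N`. -/
theorem extremePoint_support_card_le
    (S A : Type) [Fintype S] [Fintype A]
    (H N : ℕ) (hH : 1 ≤ H) (xini : S)
    (P : ℕ → S → A → S → ℝ)
    (g : Fin N → Fin H → S → A → ℝ) (ρ : Fin N → ℝ)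
    (F : Set (Fin H → S → A → ℝ))
    (hF : F = {q | (∀ h x a, 0 ≤ q h x a) ∧
      (∀ n : Fin N, ρ n ≤ ∑ h : Fin H, ∑ x : S, ∑ a : A, q h x a * g n h x a) ∧
      (∀ h : Fin H, ∀ hh : (h : ℕ) + 1 < H, ∀ x : S,
        ∑ a : A, q ⟨(h : ℕ) + 1, hh⟩ x a
          = ∑ x' : S, ∑ a' : A, P h x' a' x * q h x' a') ∧
      (∑ a : A, q ⟨0, by omega⟩ xini a = 1 ∧
        ∀ x : S, x ≠ xini → ∑ a : A, q ⟨0, by omega⟩ x a = 0)})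
    (qstar : Fin H → S → A → ℝ)
    (hqstar : qstar ∈ Set.extremePoints ℝ F) :
    Set.ncard {p : Fin H × S × A | qstar p.1 p.2.1 p.2.2 ≠ 0}
      ≤ H * Fintype.card S + N := by
  replace hF : F = occupancyPolytope hH xini P g ρ := hF
  subst hF
  let e := uncurryLinearEquiv₃ ℝ (Fin H) S A
  have hq : e qstar ∈ extremePoints ℝ (e '' _) :=
    image_extremePoints e _ ▸ mem_image_of_mem e hqstar
  have hq0 : 0 ≤ e qstar := fun p => hqstar.1.1 p.1 p.2.1 p.2.2
  have key := ncard_support_le_finrank_of_mem_extremePoints hq hq0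
    (((flowBalance P).prod (totalUtility g)) ∘ₗ e.symm.toLinearMap) fun d hd hqd =>
      ⟨qstar + e.symm d, add_mem_occupancyPolytope hqstar.1 (fun h x a => hqd (h, x, a))
        (congrArg Prod.fst hd) (congrArg Prod.snd hd), rfl⟩
  show (Function.support (e qstar)).ncard ≤ _
  simpa [finrank_prod] using key
end

section
/- Let ι be a finite index set, a : ι → ℝ^n a family of vectors, b : ι → ℝ, and P = {x ∈ ℝ^n : ∀ i ∈ ι, ⟪a_i, x⟫ ≥ b_i} where ⟪·,·⟫ is the standard inner product. If x is an extreme point of P, then the set of tight constraint normals {a_i : ⟪a_i, x⟫ = b_i} spans ℝ^n. -/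
/-! If the tight normals did not span, some `w ≠ 0` would be orthogonal to all of
them. Moving from `x` along `±w` leaves the tight constraints unchanged, and the finitely many
slack ones stay strict for small steps, so `x ± t • w ∈ P` for some `t > 0`. Then `x` is the
midpoint of two distinct points of `P`, contradicting extremality. -/

open Filter Topology

theorem eq_zero_of_mem_extremePoints_of_eventually_add_smul_mem {E : Type*} [AddCommGroup E]
    [Module ℝ E] {C : Set E} {x w : E} (hx : x ∈ Set.extremePoints ℝ C)
    (hw : ∀ᶠ t in 𝓝 (0 : ℝ), x + t • w ∈ C) : w = 0 := by
  have hsymm : ∀ᶠ t in 𝓝[>] (0 : ℝ), 0 < t ∧ x + t • w ∈ C ∧ x - t • w ∈ C := by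
    have hneg : ∀ᶠ t in 𝓝 (0 : ℝ), x + (-t) • w ∈ C :=
      (continuous_neg.tendsto' 0 0 neg_zero).eventually hw
    filter_upwards [self_mem_nhdsWithin, nhdsWithin_le_nhds (hw.and hneg)] with t ht hmem
    simpa [neg_smul, ← sub_eq_add_neg] using And.intro ht hmem
  obtain ⟨t, ht, hplus, hminus⟩ := hsymm.exists
  have hx_eq : x + t • w = x :=
    (mem_extremePoints_iff_left.mp hx).2 _ hplus _ hminus (mem_openSegment_add_sub _ _)
  simpa [ht.ne'] using hx_eq

theorem eventually_add_smul_mem_polyhedron {E ι : Type*} [NormedAddCommGroup E]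
    [InnerProductSpace ℝ E] [Finite ι] {a : ι → E} {b : ι → ℝ} {x w : E}
    (hx : ∀ i, b i ≤ inner ℝ (a i) x)
    (hw : ∀ i, inner ℝ (a i) x = b i → inner ℝ (a i) w = 0) :
    ∀ᶠ t in 𝓝 (0 : ℝ), ∀ i, b i ≤ inner ℝ (a i) (x + t • w) := by
  refine eventually_all.mpr fun i => ?_
  simp only [inner_add_right, real_inner_smul_right]
  rcases (hx i).eq_or_lt with htight | hslack
  · simp [hw i htight.symm, htight]
  · have hcont : Continuous fun t : ℝ => inner ℝ (a i) x + t * inner ℝ (a i) w := by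
      fun_prop
    filter_upwards [hcont.tendsto' 0 _ (by simp) |>.eventually (lt_mem_nhds hslack)]
      with t ht using ht.le

/-- **Tight constraints at an extreme point span the whole space.** If `x` is an extreme
point of the polyhedron `P = {x : ℝⁿ | ∀ i, ⟪a i, x⟫ ≥ b i}`, then the normals `a i` of the
constraints that are tight at `x` span `ℝⁿ`. -/
theorem extremePoint_tight_normals_span
    (n : ℕ) (ι : Type) [Fintype ι]
    (a : ι → EuclideanSpace ℝ (Fin n)) (b : ι → ℝ)
    (P : Set (EuclideanSpace ℝ (Fin n)))
    (hP : P = {x | ∀ i : ι, b i ≤ (inner ℝ (a i) x : ℝ)})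
    (x : EuclideanSpace ℝ (Fin n)) (hx : x ∈ Set.extremePoints ℝ P) :
    Submodule.span ℝ {v : EuclideanSpace ℝ (Fin n) |
      ∃ i : ι, (inner ℝ (a i) x : ℝ) = b i ∧ v = a i} = ⊤ := by
  subst hP
  refine Submodule.orthogonal_eq_bot_iff.mp <| (Submodule.eq_bot_iff _).mpr fun w hw => ?_
  have htight : ∀ i, inner ℝ (a i) x = b i → inner ℝ (a i) w = 0 := fun i hi =>
    Submodule.inner_right_of_mem_orthogonal (Submodule.subset_span (by exact ⟨i, hi, rfl⟩)) hw
  exact eq_zero_of_mem_extremePoints_of_eventually_add_smul_mem hx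
    (eventually_add_smul_mem_polyhedron hx.1 htight)
end

section
/- Let π be a Markov policy, and for each function f : ({1,…,H} × S) → A let π^f denote the deterministic (greedy) policy defined by π^f_h(a|x) = 1 if a = f(h,x) and 0 otherwise, and let a(f) = Π_{(h',x') ∈ {1,…,H}×S} π_{h'}(f(h',x')|x') be its mixture weight. Then for every h ∈ {1,…,H}, x ∈ S and a ∈ A, the occupancy measure satisfies q^π_h(x,a) = Σ_{f : ({1,…,H}×S) → A} a(f)·q^{π^f}_h(x,a). In other words, the mixed policy that selects greedy policy π^f with probability a(f) at the start of an episode has the same occupancy measure as π. -/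
lemma pi_sum_prod {ι β : Type} [Fintype ι] [Fintype β] [DecidableEq ι] (g : ι → β → ℝ) :
    ∑ s : ι → β, ∏ i, g i (s i) = ∏ i, ∑ b, g i b := by
  rw [Finset.prod_univ_sum]
  rw [Fintype.piFinset_univ]

lemma marg_aux {ι γ : Type} [Fintype ι] [Fintype γ] [DecidableEq ι] [Nonempty γ]
    (W : ι → γ → ℝ) (j : ι) (φ : γ → ℝ) (T : (ι → γ) → ℝ)
    (hT : ∀ f s, T (Function.update f j s) = T f) :
    ∑ f : ι → γ, (∏ i, W i (f i)) * (φ (f j) * T f)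
      = (∑ s : γ, W j s * φ s) *
        ∑ g : {i // i ≠ j} → γ, (∏ i : {i // i ≠ j}, W i (g i)) *
          T ((Equiv.funSplitAt j γ).symm (Classical.arbitrary γ, g)) := by
  classical
  set e := Equiv.funSplitAt j γ with he
  have h1 : ∀ (s : γ) (g : {i // i ≠ j} → γ), (e.symm (s, g)) j = s := by
    intro s g; simp [he, Equiv.funSplitAt, Equiv.piSplitAt]
  have h2 : ∀ (s : γ) (g : {i // i ≠ j} → γ) (i : ι) (hi : i ≠ j),
      (e.symm (s, g)) i = g ⟨i, hi⟩ := by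
    intro s g i hi; simp [he, Equiv.funSplitAt, Equiv.piSplitAt, hi]
  have h3 : ∀ (s : γ) (g : {i // i ≠ j} → γ),
      (∏ i, W i (e.symm (s, g) i)) = W j s * ∏ i : {i // i ≠ j}, W i (g i) := by
    intro s g
    rw [Fintype.prod_eq_mul_prod_compl j, h1]
    congr 1
    rw [Finset.prod_subtype ({j}ᶜ : Finset ι) (p := fun i => i ≠ j) (by simp)
      (fun i => W i (e.symm (s, g) i))]
    exact Finset.prod_congr rfl fun i _ => by rw [h2 s g i i.2]
  have h4 : ∀ (s : γ) (g : {i // i ≠ j} → γ),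
      T (e.symm (s, g)) = T (e.symm (Classical.arbitrary γ, g)) := by
    intro s g
    have hupd : e.symm (s, g) = Function.update (e.symm (Classical.arbitrary γ, g)) j s := by
      funext i
      by_cases hi : i = j
      · subst hi; rw [Function.update_self, h1]
      · rw [Function.update_of_ne hi, h2 s g i hi, h2 _ g i hi]
    rw [hupd, hT]
  rw [← Equiv.sum_comp e.symm]
  rw [Fintype.sum_prod_type]
  have key : ∀ (s : γ) (g : {i // i ≠ j} → γ),
      (∏ i, W i (e.symm (s, g) i)) * (φ (e.symm (s, g) j) * T (e.symm (s, g)))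
        = (W j s * φ s) * ((∏ i : {i // i ≠ j}, W i (g i)) *
            T (e.symm (Classical.arbitrary γ, g))) := by
    intro s g; rw [h3, h1, h4]; ring
  simp_rw [key]
  rw [Finset.sum_mul]
  exact Finset.sum_congr rfl fun s _ => by rw [Finset.mul_sum]

lemma aux_ind {S A : Type} [Fintype S] [Fintype A] [DecidableEq S] [DecidableEq A]
    (p : S → A → ℝ) (hp : ∀ x, ∑ b, p x b = 1) (x : S) (a : A) :
    ∑ s : S → A, (∏ x', p x' (s x')) * (if a = s x then 1 else 0) = p x a := by
  have key : ∀ s : S → A, (∏ x', p x' (s x')) * (if a = s x then 1 else 0)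
      = ∏ x', (p x' (s x') * if x' = x then (if a = s x' then 1 else 0) else 1) := by
    intro s
    rw [Finset.prod_mul_distrib]
    congr 1
    rw [Finset.prod_ite_eq' Finset.univ x (fun x' => if a = s x' then 1 else 0)]
    simp
  simp_rw [key]
  rw [pi_sum_prod (fun x' b => p x' b * if x' = x then (if a = b then 1 else 0) else 1)]
  have h2 : ∀ x' : S, (∑ b, p x' b * if x' = x then (if a = b then 1 else 0) else 1)
      = if x' = x then p x a else 1 := by
    intro x'
    by_cases hx : x' = x
    · subst hx; simp [mul_ite, Finset.sum_ite_eq]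
    · simp [hx, hp x']
  simp_rw [h2]
  rw [Finset.prod_ite_eq' Finset.univ x (fun _ => p x a)]
  simp

/-- The occupancy measure of a Markov policy `pol`, defined recursively:
`occ 0 x a = 1{x = xini} · pol 0 x a` and
`occ (h+1) x a = pol (h+1) x a · ∑ x' a', P h x' a' x · occ h x' a'`. -/
noncomputable def occ {S A : Type} [Fintype S] [Fintype A] [DecidableEq S]
    (P : ℕ → S → A → S → ℝ) (xini : S) (pol : ℕ → S → A → ℝ) : ℕ → S → A → ℝ
  | 0 => fun x a => (if x = xini then 1 else 0) * pol 0 x a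
  | h + 1 => fun x a =>
      pol (h + 1) x a * ∑ x' : S, ∑ a' : A, P h x' a' x * occ P xini pol h x' a'

/-- **Decomposition of a Markov policy into greedy policies.** For a Markov policy `pol`
on horizon `H`, and for each selection function `f : Fin H → S → A` the greedy policy
`gr f` (taking action `f h x` with probability one at step `h < H`) with mixture weight
`a(f) = ∏_{h', x'} pol h' x' (f h' x')`, the occupancy measure of `pol` coincides at every
step `h < H` with the mixture `∑ f, a(f) · occ (gr f)`. -/
theorem markov_policy_greedy_decomposition
    (S A : Type) [Fintype S] [Fintype A] [DecidableEq S] [DecidableEq A]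
    (H : ℕ) (hH : 1 ≤ H) (xini : S)
    (P : ℕ → S → A → S → ℝ)
    (hPnonneg : ∀ h, h + 1 < H → ∀ x a x', 0 ≤ P h x a x')
    (hPsum : ∀ h, h + 1 < H → ∀ x a, ∑ x' : S, P h x a x' = 1)
    (pol : ℕ → S → A → ℝ)
    (hpolnonneg : ∀ h, h < H → ∀ x a, 0 ≤ pol h x a)
    (hpolsum : ∀ h, h < H → ∀ x : S, ∑ a : A, pol h x a = 1)
    (gr : (Fin H → S → A) → (ℕ → S → A → ℝ))
    (hgr : ∀ (f : Fin H → S → A) (h : ℕ) (hh : h < H) (x : S) (a : A),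
      gr f h x a = if a = f ⟨h, hh⟩ x then 1 else 0) :
    ∀ (h : ℕ), h < H → ∀ (x : S) (a : A),
      occ P xini pol h x a
        = ∑ f : Fin H → S → A,
            (∏ h' : Fin H, ∏ x' : S, pol h' x' (f h' x')) * occ P xini (gr f) h x a := by
  classical
  -- the weight at one step
  set W : Fin H → (S → A) → ℝ := fun i s => ∏ x' : S, pol i x' (s x') with hW
  have hWone : ∀ i : Fin H, ∑ s : S → A, W i s = 1 := by
    intro i
    rw [hW]
    rw [pi_sum_prod (fun x' b => pol i x' b)]
    exact Finset.prod_eq_one fun x' _ => hpolsum i i.2 x'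
  -- occ of a greedy policy only depends on the early coordinates of f
  have dep : ∀ m, m < H → ∀ f g : Fin H → S → A,
      (∀ i : Fin H, (i : ℕ) ≤ m → f i = g i) → ∀ x a,
      occ P xini (gr f) m x a = occ P xini (gr g) m x a := by
    intro m
    induction m with
    | zero =>
      intro hm f g hfg x a
      have : f ⟨0, hm⟩ = g ⟨0, hm⟩ := hfg ⟨0, hm⟩ (le_refl 0)
      simp only [occ, hgr f 0 hm, hgr g 0 hm, this]
    | succ n ihd =>
      intro hm f g hfg x a
      have hn : n < H := Nat.lt_of_succ_lt hm
      simp only [occ]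
      have h1 : gr f (n + 1) x a = gr g (n + 1) x a := by
        rw [hgr f (n + 1) hm, hgr g (n + 1) hm, hfg ⟨n + 1, hm⟩ (le_refl _)]
      rw [h1]
      congr 1
      refine Finset.sum_congr rfl fun x' _ => Finset.sum_congr rfl fun a' _ => ?_
      rw [ihd hn f g (fun i hi => hfg i (le_trans hi (Nat.le_succ n))) x' a']
  intro h
  induction h with
  | zero =>
    intro hh x a
    haveI : Nonempty (S → A) := ⟨fun _ => a⟩
    set j : Fin H := ⟨0, hh⟩ with hj
    have hshape : ∀ f : Fin H → S → A,
        (∏ h' : Fin H, ∏ x' : S, pol h' x' (f h' x')) * occ P xini (gr f) 0 x a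
          = (∏ i, W i (f i)) *
              ((if a = (f j) x then 1 else 0) * (if x = xini then 1 else 0)) := by
      intro f
      simp only [occ, hgr f 0 hh, hW]
      ring
    rw [Finset.sum_congr rfl fun f _ => hshape f]
    rw [marg_aux W j (fun s => if a = s x then 1 else 0)
      (fun _ => if x = xini then 1 else 0) (fun _ _ => rfl)]
    have hI : ∑ s : S → A, W j s * (if a = s x then 1 else 0) = pol 0 x a := by
      rw [hW]
      exact aux_ind (fun x' b => pol j x' b) (fun x' => hpolsum j j.2 x') x a
    rw [hI]
    have hRest : ∑ g : {i // i ≠ j} → (S → A),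
        (∏ i : {i // i ≠ j}, W i (g i)) * (if x = xini then 1 else 0)
          = (if x = xini then 1 else 0) := by
      rw [← Finset.sum_mul]
      rw [pi_sum_prod (fun (i : {i // i ≠ j}) s => W i s)]
      rw [Finset.prod_eq_one fun i _ => hWone i.1, one_mul]
    rw [hRest]
    simp only [occ]
    ring
  | succ n ih =>
    intro hh x a
    haveI : Nonempty (S → A) := ⟨fun _ => a⟩
    have hn : n < H := Nat.lt_of_succ_lt hh
    set j : Fin H := ⟨n + 1, hh⟩ with hj
    set T : (Fin H → S → A) → ℝ := fun f =>
      ∑ x' : S, ∑ a' : A, P n x' a' x * occ P xini (gr f) n x' a' with hT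
    have hTupd : ∀ (f : Fin H → S → A) (s : S → A), T (Function.update f j s) = T f := by
      intro f s
      rw [hT]
      refine Finset.sum_congr rfl fun x' _ => Finset.sum_congr rfl fun a' _ => ?_
      congr 1
      refine dep n hn _ f (fun i hi => Function.update_of_ne ?_ s f) x' a'
      intro hij
      rw [hij, hj] at hi
      exact absurd hi (by simp)
    have hshape : ∀ f : Fin H → S → A,
        (∏ h' : Fin H, ∏ x' : S, pol h' x' (f h' x')) * occ P xini (gr f) (n + 1) x a
          = (∏ i, W i (f i)) * ((if a = (f j) x then 1 else 0) * T f) := by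
      intro f
      simp only [occ, hgr f (n + 1) hh, hW, hT, hj]
    rw [Finset.sum_congr rfl fun f _ => hshape f]
    rw [marg_aux W j (fun s => if a = s x then 1 else 0) T hTupd]
    have hI : ∑ s : S → A, W j s * (if a = s x then 1 else 0) = pol (n + 1) x a := by
      rw [hW]
      exact aux_ind (fun x' b => pol j x' b) (fun x' => hpolsum j j.2 x') x a
    rw [hI]
    -- identify the remaining sum with ∑ f (∏ W) * T f
    have hmarg1 := marg_aux W j (fun _ => (1 : ℝ)) T hTupd
    rw [Finset.sum_congr rfl fun s (_ : s ∈ Finset.univ) => (mul_one (W j s)),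
      hWone j, one_mul] at hmarg1
    simp_rw [one_mul] at hmarg1
    rw [← hmarg1]
    -- now compute ∑ f (∏ W) * T f
    have hswap : ∑ f : Fin H → S → A, (∏ i, W i (f i)) * T f
        = ∑ x' : S, ∑ a' : A, P n x' a' x * occ P xini pol n x' a' := by
      calc ∑ f : Fin H → S → A, (∏ i, W i (f i)) * T f
          = ∑ f : Fin H → S → A, ∑ x' : S, ∑ a' : A,
              (∏ i, W i (f i)) * (P n x' a' x * occ P xini (gr f) n x' a') := by
            refine Finset.sum_congr rfl fun f _ => ?_
            rw [hT, Finset.mul_sum]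
            exact Finset.sum_congr rfl fun x' _ => Finset.mul_sum _ _ _
        _ = ∑ x' : S, ∑ a' : A, ∑ f : Fin H → S → A,
              (∏ i, W i (f i)) * (P n x' a' x * occ P xini (gr f) n x' a') := by
            rw [Finset.sum_comm]
            exact Finset.sum_congr rfl fun x' _ => Finset.sum_comm
        _ = ∑ x' : S, ∑ a' : A, P n x' a' x * occ P xini pol n x' a' := by
            refine Finset.sum_congr rfl fun x' _ => Finset.sum_congr rfl fun a' _ => ?_
            rw [ih hn x' a', Finset.mul_sum]
            exact Finset.sum_congr rfl fun f _ => by rw [hW]; ring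
    rw [hswap]
    simp only [occ]
end

section
/- Let q : {1,…,H} × S × A → ℝ satisfy q ≥ 0, the flow constraints Σ_{a∈A} q_{h+1}(x,a) = Σ_{x'∈S, a'∈A} P_h(x|x',a')·q_h(x',a') for each h ∈ {1,…,H−1} and x ∈ S, and the initial constraints Σ_{a∈A} q_1(x_ini,a) = 1, Σ_{a∈A} q_1(x,a) = 0 for x ≠ x_ini. Let π be any Markov policy such that π_h(a|x) = q_h(x,a) / (Σ_{a'∈A} q_h(x,a')) whenever Σ_{a'∈A} q_h(x,a') > 0 (π_h(·|x) is an arbitrary probability distribution when the denominator vanishes). Then the occupancy measure of π equals q: q^π_h(x,a) = q_h(x,a) for all h, x, a. -/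
/-- **A feasible occupancy measure is realized by its induced policy.** If `q ≥ 0`
satisfies the flow and initial constraints, and `pol` is any Markov policy with
`pol h x a = q h x a / ∑ a', q h x a'` whenever the denominator is positive, then the
occupancy measure of `pol` equals `q` at every step `h < H`. -/
theorem occupancy_of_induced_policy
    (S A : Type) [Fintype S] [Fintype A] [DecidableEq S]
    (H : ℕ) (hH : 1 ≤ H) (xini : S)
    (P : ℕ → S → A → S → ℝ)
    (hPnonneg : ∀ h, h + 1 < H → ∀ x a x', 0 ≤ P h x a x')
    (hPsum : ∀ h, h + 1 < H → ∀ x a, ∑ x' : S, P h x a x' = 1)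
    (q : ℕ → S → A → ℝ)
    (hqnonneg : ∀ h, h < H → ∀ x a, 0 ≤ q h x a)
    (hflow : ∀ h, h + 1 < H → ∀ x : S,
      ∑ a : A, q (h + 1) x a = ∑ x' : S, ∑ a' : A, P h x' a' x * q h x' a')
    (hinit1 : ∑ a : A, q 0 xini a = 1)
    (hinit0 : ∀ x : S, x ≠ xini → ∑ a : A, q 0 x a = 0)
    (pol : ℕ → S → A → ℝ)
    (hpolnonneg : ∀ h, h < H → ∀ x a, 0 ≤ pol h x a)
    (hpolsum : ∀ h, h < H → ∀ x : S, ∑ a : A, pol h x a = 1)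
    (hpolq : ∀ h, h < H → ∀ x a, 0 < ∑ a' : A, q h x a' →
      pol h x a = q h x a / ∑ a' : A, q h x a') :
    ∀ h, h < H → ∀ (x : S) (a : A), occ P xini pol h x a = q h x a := by
  intro h
  induction h with
  | zero =>
    intro h0 x a
    by_cases hx : x = xini
    · subst hx
      have hpos : (0:ℝ) < ∑ a' : A, q 0 x a' := by rw [hinit1]; norm_num
      simp only [occ, if_pos rfl, one_mul]
      rw [hpolq 0 h0 x a hpos, hinit1, div_one]
      simp
    · have hz : q 0 x a = 0 := by
        have := (Finset.sum_eq_zero_iff_of_nonneg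
          (fun a' _ => hqnonneg 0 h0 x a')).mp (hinit0 x hx)
        exact this a (Finset.mem_univ a)
      simp [occ, hx, hz]
  | succ h ih =>
    intro hh1 x a
    have hhH : h < H := Nat.lt_of_succ_lt hh1
    have key : (∑ x' : S, ∑ a' : A, P h x' a' x * occ P xini pol h x' a')
        = ∑ a : A, q (h + 1) x a := by
      rw [hflow h hh1 x]
      refine Finset.sum_congr rfl fun x' _ => Finset.sum_congr rfl fun a' _ => ?_
      rw [ih hhH x' a']
    show pol (h + 1) x a * _ = _
    rw [key]
    rcases lt_or_eq_of_le (Finset.sum_nonneg fun a' _ => hqnonneg (h+1) hh1 x a')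
      with hpos | hzero
    · rw [hpolq (h+1) hh1 x a hpos, div_mul_cancel₀]
      exact ne_of_gt hpos
    · have hz : q (h+1) x a = 0 := by
        have := (Finset.sum_eq_zero_iff_of_nonneg
          (fun a' _ => hqnonneg (h+1) hh1 x a')).mp hzero.symm
        exact this a (Finset.mem_univ a)
      rw [← hzero, hz, mul_zero]
end
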